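/- arXiv:1110.1848 — 3 statements merged into one kernel-verified Lean document; each statement's English description precedes it below -/
import Mathlib

section
/- Let L be a first-order language consisting of function symbols (and constants), let Λ be a finite set of ground L-terms with |Λ| ≥ 2, and let p be an evaluation on Λ. If t, s ∈ Λ satisfy t ≈_p s, and u(x), v(x) are L-terms in at most one variable x such that the ground terms u(t), u(s), v(t), v(s) all belong to Λ, then p ⊨ u(t) = v(t) iff p ⊨ u(s) = v(s), and p ⊨ u(t) ≤ v(t) iff p ⊨ u(s) ≤ v(s). -/
open FirstOrder Language

/-! Under the enumeration, `≈_p` and `≺_p` become relations between positions in `ℕ`.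
There `≈_p` is an equivalence (two runs of `≈`-separators overlapping or abutting at a position
merge into one), and `≺_p` is invariant under `≈_p` on either side, because a `≺`-separator
between `i` and `j` cannot lie between `i` and an `≈_p`-equivalent `i'`. The congruence property
gives `u(t) ≈_p u(s)` and `v(t) ≈_p v(s)`, so both atomic formulas transfer. -/

namespace Separators

variable (ε : ℕ → Bool)

def Approx (i j : ℕ) : Prop :=
  ∀ k, min i j < k → k ≤ max i j → ε k = true

def Prec (i j : ℕ) : Prop :=
  i < j ∧ ∃ k, i < k ∧ k ≤ j ∧ ε k = false

variable {ε}

theorem approx_equivalence : Equivalence (Approx ε) where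
  refl _ _ h₁ h₂ := by omega
  symm h k h₁ h₂ := h k (by omega) (by omega)
  trans {i j l} h₁ h₂ k hk₁ hk₂ := by
    rcases (by omega : (min i j < k ∧ k ≤ max i j) ∨ (min j l < k ∧ k ≤ max j l)) with
      ⟨hk₁, hk₂⟩ | ⟨hk₁, hk₂⟩
    · exact h₁ k hk₁ hk₂
    · exact h₂ k hk₁ hk₂

theorem Prec.of_approx {i i' j j' : ℕ} (hi : Approx ε i i') (hj : Approx ε j j')
    (h : Prec ε i j) : Prec ε i' j' := by
  obtain ⟨hij, k, hik, hkj, hk⟩ := h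
  have hi'k : i' < k := by
    by_contra! hki'
    simpa [hk] using hi k (by omega) (by omega)
  have hkj' : k ≤ j' := by
    by_contra! hj'k
    simpa [hk] using hj k (by omega) (by omega)
  exact ⟨by omega, k, hi'k, hkj', hk⟩

end Separators

theorem Equivalence.rel_congr_and_or_congr {α : Sort*} {r q : α → α → Prop}
    (hr : Equivalence r) (hq : ∀ {x x' y y'}, r x x' → r y y' → q x y → q x' y')
    {x x' y y' : α} (hx : r x x') (hy : r y y') :
    (r x y ↔ r x' y') ∧ (r x y ∨ q x y ↔ r x' y' ∨ q x' y') := by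
  have hrel : r x y ↔ r x' y' :=
    ⟨fun h => hr.trans (hr.trans (hr.symm hx) h) hy,
      fun h => hr.trans (hr.trans hx h) (hr.symm hy)⟩
  exact ⟨hrel, or_congr hrel ⟨hq hx hy, hq (hr.symm hx) (hr.symm hy)⟩⟩

open Separators in
theorem evaluation_atomic_substitution_general
    (L : Language) (Λ : Set (L.Term Empty)) (n : ℕ)
    (e : Λ ≃ Fin n) (ε : ℕ → Bool)
    (approx prec : L.Term Empty → L.Term Empty → Prop)
    (happrox : ∀ a b, approx a b ↔
      ∃ (ha : a ∈ Λ) (hb : b ∈ Λ),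
        ∀ k : ℕ, min (e ⟨a, ha⟩ : ℕ) (e ⟨b, hb⟩ : ℕ) < k →
          k ≤ max (e ⟨a, ha⟩ : ℕ) (e ⟨b, hb⟩ : ℕ) → ε k = true)
    (hprec : ∀ a b, prec a b ↔
      ∃ (ha : a ∈ Λ) (hb : b ∈ Λ),
        (e ⟨a, ha⟩ : ℕ) < (e ⟨b, hb⟩ : ℕ) ∧
          ∃ k : ℕ, (e ⟨a, ha⟩ : ℕ) < k ∧ k ≤ (e ⟨b, hb⟩ : ℕ) ∧ ε k = false)
    -- `≈_p` is a congruence (`p` is an evaluation):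
    (hcong : ∀ a b : L.Term Empty, a ∈ Λ → b ∈ Λ → approx a b →
      ∀ w : L.Term (Fin 1), w.subst (fun _ => a) ∈ Λ → w.subst (fun _ => b) ∈ Λ →
        approx (w.subst fun _ => a) (w.subst fun _ => b))
    (t s : L.Term Empty) (ht : t ∈ Λ) (hs : s ∈ Λ) (hts : approx t s)
    (u v : L.Term (Fin 1))
    (hut : u.subst (fun _ => t) ∈ Λ) (hus : u.subst (fun _ => s) ∈ Λ)
    (hvt : v.subst (fun _ => t) ∈ Λ) (hvs : v.subst (fun _ => s) ∈ Λ) :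
    (approx (u.subst fun _ => t) (v.subst fun _ => t) ↔
      approx (u.subst fun _ => s) (v.subst fun _ => s)) ∧
    ((approx (u.subst fun _ => t) (v.subst fun _ => t) ∨
        prec (u.subst fun _ => t) (v.subst fun _ => t)) ↔
      (approx (u.subst fun _ => s) (v.subst fun _ => s) ∨
        prec (u.subst fun _ => s) (v.subst fun _ => s))) := by
  have happrox_pos : ∀ a b (ha : a ∈ Λ) (hb : b ∈ Λ),
      approx a b ↔ Approx ε (e ⟨a, ha⟩) (e ⟨b, hb⟩) := fun a b ha hb => by
    simp only [happrox, Approx, exists_prop_of_true ha, exists_prop_of_true hb]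
  have hprec_pos : ∀ a b (ha : a ∈ Λ) (hb : b ∈ Λ),
      prec a b ↔ Prec ε (e ⟨a, ha⟩) (e ⟨b, hb⟩) := fun a b ha hb => by
    simp only [hprec, Prec, exists_prop_of_true ha, exists_prop_of_true hb]
  have hu := (happrox_pos _ _ hut hus).1 (hcong t s ht hs hts u hut hus)
  have hv := (happrox_pos _ _ hvt hvs).1 (hcong t s ht hs hts v hvt hvs)
  rw [happrox_pos _ _ hut hvt, happrox_pos _ _ hus hvs, hprec_pos _ _ hut hvt,
    hprec_pos _ _ hus hvs]
  exact approx_equivalence.rel_congr_and_or_congr Prec.of_approx hu hv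

/-- Let `L` be a first-order language of function symbols (and constants),
`Λ` a finite set of ground `L`-terms with `|Λ| = n ≥ 2`, and `p` an evaluation on `Λ`:
a pre-evaluation (bijective enumeration `e : Λ ≃ Fin n` together with separators
`ε k ∈ {≈, ≺}`, where `ε k = true` means `≈` and `ε k = false` means `≺`; `≈_p` and
`≺_p` are as usual) whose relation `≈_p` is a congruence.  If `t, s ∈ Λ` satisfy
`t ≈_p s`, and `u(x)`, `v(x)` are `L`-terms in at most one variable such that
`u(t), u(s), v(t), v(s) ∈ Λ`, then `p ⊨ u(t) = v(t)` iff `p ⊨ u(s) = v(s)`, and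
`p ⊨ u(t) ≤ v(t)` iff `p ⊨ u(s) ≤ v(s)`  (where `p ⊨ a = b` iff `a ≈_p b` and
`p ⊨ a ≤ b` iff `a ≈_p b` or `a ≺_p b`). -/
theorem evaluation_atomic_substitution
    (L : Language) (Λ : Set (L.Term Empty)) (n : ℕ) (hn : 2 ≤ n)
    (e : Λ ≃ Fin n) (ε : ℕ → Bool)
    (approx prec : L.Term Empty → L.Term Empty → Prop)
    (happrox : ∀ a b, approx a b ↔
      ∃ (ha : a ∈ Λ) (hb : b ∈ Λ),
        ∀ k : ℕ, min (e ⟨a, ha⟩ : ℕ) (e ⟨b, hb⟩ : ℕ) < k →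
          k ≤ max (e ⟨a, ha⟩ : ℕ) (e ⟨b, hb⟩ : ℕ) → ε k = true)
    (hprec : ∀ a b, prec a b ↔
      ∃ (ha : a ∈ Λ) (hb : b ∈ Λ),
        (e ⟨a, ha⟩ : ℕ) < (e ⟨b, hb⟩ : ℕ) ∧
          ∃ k : ℕ, (e ⟨a, ha⟩ : ℕ) < k ∧ k ≤ (e ⟨b, hb⟩ : ℕ) ∧ ε k = false)
    -- `≈_p` is a congruence (`p` is an evaluation):
    (hcong : ∀ a b : L.Term Empty, a ∈ Λ → b ∈ Λ → approx a b →
      ∀ w : L.Term (Fin 1), w.subst (fun _ => a) ∈ Λ → w.subst (fun _ => b) ∈ Λ →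
        approx (w.subst fun _ => a) (w.subst fun _ => b))
    (t s : L.Term Empty) (ht : t ∈ Λ) (hs : s ∈ Λ) (hts : approx t s)
    (u v : L.Term (Fin 1))
    (hut : u.subst (fun _ => t) ∈ Λ) (hus : u.subst (fun _ => s) ∈ Λ)
    (hvt : v.subst (fun _ => t) ∈ Λ) (hvs : v.subst (fun _ => s) ∈ Λ) :
    (approx (u.subst fun _ => t) (v.subst fun _ => t) ↔
      approx (u.subst fun _ => s) (v.subst fun _ => s)) ∧
    ((approx (u.subst fun _ => t) (v.subst fun _ => t) ∨
        prec (u.subst fun _ => t) (v.subst fun _ => t)) ↔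
      (approx (u.subst fun _ => s) (v.subst fun _ => s) ∨
        prec (u.subst fun _ => s) (v.subst fun _ => s))) :=
  evaluation_atomic_substitution_general L Λ n e ε approx prec happrox hprec hcong t s ht hs hts u v
    hut hus hvt hvs
end

section
/- Let L be a first-order language consisting of function symbols (and constants), let Λ be a finite set of ground L-terms with |Λ| ≥ 2, and let p be an evaluation on Λ. Then Leibniz's Law holds in p: for all t, s ∈ Λ and every quantifier-free formula φ(x) in at most one free variable x, whose atomic subformulas are of the form u = v or u ≤ v for L-terms u, v, such that every ground term occurring in φ(t) and every ground term occurring in φ(s) belongs to Λ, if p ⊨ t = s and p ⊨ φ(t) then p ⊨ φ(s). -/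
/-!
Because `≈_p` is symmetric and transitive and `≺_p` is invariant under `≈_p` on both sides,
the truth value of an atom `u = v` or `u ≤ v` only depends on the `≈_p`-classes of `u` and `v`.
The congruence property gives `u(t) ≈_p u(s)` for every term `u(x)` of `φ`, so by induction on
`φ` the formulas `φ(t)` and `φ(s)` have the same truth value.
-/

open FirstOrder Language

/-- Quantifier-free formulas over the language `L` with variables from `α`,
whose atoms are `u = v` and `u ≤ v` for `L`-terms `u`, `v`, built with
`¬`, `∧`, `∨`, `→`. -/
inductive QF (L : Language) (α : Type) : Type _
  | eq : L.Term α → L.Term α → QF L α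
  | le : L.Term α → L.Term α → QF L α
  | not : QF L α → QF L α
  | and : QF L α → QF L α → QF L α
  | or : QF L α → QF L α → QF L α
  | imp : QF L α → QF L α → QF L α

/-- Substituting ground terms for the variables of a quantifier-free formula. -/
def QF.substG {L : Language} {α : Type} (σ : α → L.Term Empty) :
    QF L α → QF L Empty
  | .eq u v => .eq (u.subst σ) (v.subst σ)
  | .le u v => .le (u.subst σ) (v.subst σ)
  | .not φ => .not (φ.substG σ)
  | .and φ ψ => .and (φ.substG σ) (ψ.substG σ)
  | .or φ ψ => .or (φ.substG σ) (ψ.substG σ)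
  | .imp φ ψ => .imp (φ.substG σ) (ψ.substG σ)

/-- The ground terms occurring in a ground quantifier-free formula
(the two sides of each atomic subformula). -/
def QF.terms {L : Language} : QF L Empty → Set (L.Term Empty)
  | .eq u v => {u, v}
  | .le u v => {u, v}
  | .not φ => φ.terms
  | .and φ ψ => φ.terms ∪ ψ.terms
  | .or φ ψ => φ.terms ∪ ψ.terms
  | .imp φ ψ => φ.terms ∪ ψ.terms

/-- Satisfaction of a ground quantifier-free formula in an evaluation `p`, given its
relations `≈_p` and `≺_p`:  `p ⊨ u = v` iff `u ≈_p v`;  `p ⊨ u ≤ v` iff `u ≈_p v` or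
`u ≺_p v`; classical truth-functional clauses for `¬`, `∧`, `∨`, `→`. -/
def QF.sat {L : Language} (approx prec : L.Term Empty → L.Term Empty → Prop) :
    QF L Empty → Prop
  | .eq u v => approx u v
  | .le u v => approx u v ∨ prec u v
  | .not φ => ¬ φ.sat approx prec
  | .and φ ψ => φ.sat approx prec ∧ ψ.sat approx prec
  | .or φ ψ => φ.sat approx prec ∨ ψ.sat approx prec
  | .imp φ ψ => φ.sat approx prec → ψ.sat approx prec

theorem rel_iff_of_rel_of_rel {γ : Sort*} {r : γ → γ → Prop} [Std.Symm r] [IsTrans γ r]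
    {a a' b b' : γ} (ha : r a a') (hb : r b b') : r a b ↔ r a' b' :=
  ⟨fun h => trans_of r (trans_of r (symm_of r ha) h) hb,
    fun h => trans_of r (trans_of r ha h) (symm_of r hb)⟩

section SatCongr

variable {L : Language} {approx prec : L.Term Empty → L.Term Empty → Prop}

theorem QF.sat_substG_iff {α : Type} {Λ : Set (L.Term Empty)}
    [Std.Symm approx] [IsTrans _ approx]
    (hprec : ∀ ⦃a a' b b'⦄, approx a a' → approx b b' → prec a b → prec a' b')
    {σ τ : α → L.Term Empty}
    (hστ : ∀ u : L.Term α, u.subst σ ∈ Λ → u.subst τ ∈ Λ → approx (u.subst σ) (u.subst τ)) :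
    ∀ ψ : QF L α, (ψ.substG σ).terms ⊆ Λ → (ψ.substG τ).terms ⊆ Λ →
      ((ψ.substG σ).sat approx prec ↔ (ψ.substG τ).sat approx prec)
  | .eq u v, hσ, hτ => by
    obtain ⟨huσ, hvσ⟩ := Set.pair_subset_iff.mp hσ
    obtain ⟨huτ, hvτ⟩ := Set.pair_subset_iff.mp hτ
    exact rel_iff_of_rel_of_rel (hστ u huσ huτ) (hστ v hvσ hvτ)
  | .le u v, hσ, hτ => by
    obtain ⟨huσ, hvσ⟩ := Set.pair_subset_iff.mp hσ
    obtain ⟨huτ, hvτ⟩ := Set.pair_subset_iff.mp hτ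
    have hu := hστ u huσ huτ
    have hv := hστ v hvσ hvτ
    exact or_congr (rel_iff_of_rel_of_rel hu hv)
      ⟨hprec hu hv, hprec (symm_of approx hu) (symm_of approx hv)⟩
  | .not φ, hσ, hτ => not_congr (QF.sat_substG_iff hprec hστ φ hσ hτ)
  | .and φ ψ, hσ, hτ => by
    obtain ⟨hφσ, hψσ⟩ := Set.union_subset_iff.mp hσ
    obtain ⟨hφτ, hψτ⟩ := Set.union_subset_iff.mp hτ
    exact and_congr (QF.sat_substG_iff hprec hστ φ hφσ hφτ)
      (QF.sat_substG_iff hprec hστ ψ hψσ hψτ)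
  | .or φ ψ, hσ, hτ => by
    obtain ⟨hφσ, hψσ⟩ := Set.union_subset_iff.mp hσ
    obtain ⟨hφτ, hψτ⟩ := Set.union_subset_iff.mp hτ
    exact or_congr (QF.sat_substG_iff hprec hστ φ hφσ hφτ)
      (QF.sat_substG_iff hprec hστ ψ hψσ hψτ)
  | .imp φ ψ, hσ, hτ => by
    obtain ⟨hφσ, hψσ⟩ := Set.union_subset_iff.mp hσ
    obtain ⟨hφτ, hψτ⟩ := Set.union_subset_iff.mp hτ
    exact imp_congr (QF.sat_substG_iff hprec hστ φ hφσ hφτ)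
      (QF.sat_substG_iff hprec hστ ψ hψσ hψτ)

end SatCongr

namespace PreEvaluation

variable {β : Type*} {Λ : Set β} (pos : Λ → ℕ) (ε : ℕ → Bool)

/-- `≈_p` for the enumeration `pos` and separators `ε` (`true` standing for `≈`). -/
def Approx (a b : β) : Prop :=
  ∃ (ha : a ∈ Λ) (hb : b ∈ Λ), ∀ k : ℕ, min (pos ⟨a, ha⟩) (pos ⟨b, hb⟩) < k →
    k ≤ max (pos ⟨a, ha⟩) (pos ⟨b, hb⟩) → ε k = true

/-- `≺_p` for the enumeration `pos` and separators `ε` (`false` standing for `≺`). -/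
def Prec (a b : β) : Prop :=
  ∃ (ha : a ∈ Λ) (hb : b ∈ Λ), pos ⟨a, ha⟩ < pos ⟨b, hb⟩ ∧
    ∃ k : ℕ, pos ⟨a, ha⟩ < k ∧ k ≤ pos ⟨b, hb⟩ ∧ ε k = false

variable {pos ε}

instance : Std.Symm (Approx pos ε) where
  symm := by
    rintro a b ⟨ha, hb, h⟩
    exact ⟨hb, ha, fun k h₁ h₂ => h k (by omega) (by omega)⟩

instance : IsTrans β (Approx pos ε) where
  trans := by
    rintro a b c ⟨ha, hb, hab⟩ ⟨_, hc, hbc⟩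
    refine ⟨ha, hc, fun k h₁ h₂ => ?_⟩
    by_cases hk : min (pos ⟨a, ha⟩) (pos ⟨b, hb⟩) < k ∧ k ≤ max (pos ⟨a, ha⟩) (pos ⟨b, hb⟩)
    · exact hab k hk.1 hk.2
    · exact hbc k (by omega) (by omega)

/-- A `≺`-separator between `a` and `b` cannot lie between `a` and `a'`, nor between `b` and
`b'`, so it also separates `a'` from `b'`. -/
theorem prec_of_approx_of_approx ⦃a a' b b' : β⦄ (ha : Approx pos ε a a') (hb : Approx pos ε b b')
    (hab : Prec pos ε a b) : Prec pos ε a' b' := by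
  obtain ⟨_, ha', haa'⟩ := ha
  obtain ⟨_, hb', hbb'⟩ := hb
  obtain ⟨ha, hb, -, k, hak, hkb, hk⟩ := hab
  have hak' : pos ⟨a', ha'⟩ < k := by
    by_contra! h
    simpa [hk] using haa' k (by omega) (by omega)
  have hkb' : k ≤ pos ⟨b', hb'⟩ := by
    by_contra! h
    simpa [hk] using hbb' k (by omega) (by omega)
  exact ⟨ha', hb', by omega, k, hak', hkb', hk⟩

end PreEvaluation

open PreEvaluation in
theorem evaluation_leibniz_law_general
    (L : Language) (Λ : Set (L.Term Empty)) (n : ℕ)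
    (e : Λ ≃ Fin n) (ε : ℕ → Bool)
    (approx prec : L.Term Empty → L.Term Empty → Prop)
    (happrox : ∀ a b, approx a b ↔
      ∃ (ha : a ∈ Λ) (hb : b ∈ Λ),
        ∀ k : ℕ, min (e ⟨a, ha⟩ : ℕ) (e ⟨b, hb⟩ : ℕ) < k →
          k ≤ max (e ⟨a, ha⟩ : ℕ) (e ⟨b, hb⟩ : ℕ) → ε k = true)
    (hprec : ∀ a b, prec a b ↔
      ∃ (ha : a ∈ Λ) (hb : b ∈ Λ),
        (e ⟨a, ha⟩ : ℕ) < (e ⟨b, hb⟩ : ℕ) ∧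
          ∃ k : ℕ, (e ⟨a, ha⟩ : ℕ) < k ∧ k ≤ (e ⟨b, hb⟩ : ℕ) ∧ ε k = false)
    -- `≈_p` is a congruence (`p` is an evaluation):
    (hcong : ∀ a b : L.Term Empty, a ∈ Λ → b ∈ Λ → approx a b →
      ∀ w : L.Term (Fin 1), w.subst (fun _ => a) ∈ Λ → w.subst (fun _ => b) ∈ Λ →
        approx (w.subst fun _ => a) (w.subst fun _ => b))
    (t s : L.Term Empty) (ht : t ∈ Λ) (hs : s ∈ Λ)
    (φ : QF L (Fin 1))
    (hφt : ∀ w ∈ (φ.substG fun _ => t).terms, w ∈ Λ)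
    (hφs : ∀ w ∈ (φ.substG fun _ => s).terms, w ∈ Λ)
    (hts : approx t s)
    (hsat : QF.sat approx prec (φ.substG fun _ => t)) :
    QF.sat approx prec (φ.substG fun _ => s) := by
  obtain rfl : approx = Approx (fun x => (e x : ℕ)) ε := by
    ext a b
    exact happrox a b
  obtain rfl : prec = Prec (fun x => (e x : ℕ)) ε := by
    ext a b
    exact hprec a b
  exact (QF.sat_substG_iff prec_of_approx_of_approx
    (hcong t s ht hs hts) φ hφt hφs).mp hsat

/-- Leibniz's Law: Let `L` be a first-order language of function symbols
(and constants), `Λ` a finite set of ground `L`-terms with `|Λ| = n ≥ 2`, and `p` an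
evaluation on `Λ` (a pre-evaluation, given by an enumeration `e : Λ ≃ Fin n` and
separators `ε k ∈ {≈, ≺}` — `true` meaning `≈`, `false` meaning `≺` — whose relation
`≈_p` is a congruence).  For all `t, s ∈ Λ` and every quantifier-free formula `φ(x)`
in at most one free variable whose atoms are `u = v` or `u ≤ v`, such that every
ground term occurring in `φ(t)` and in `φ(s)` belongs to `Λ`:
if `p ⊨ t = s` and `p ⊨ φ(t)` then `p ⊨ φ(s)`. -/
theorem evaluation_leibniz_law
    (L : Language) (Λ : Set (L.Term Empty)) (n : ℕ) (hn : 2 ≤ n)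
    (e : Λ ≃ Fin n) (ε : ℕ → Bool)
    (approx prec : L.Term Empty → L.Term Empty → Prop)
    (happrox : ∀ a b, approx a b ↔
      ∃ (ha : a ∈ Λ) (hb : b ∈ Λ),
        ∀ k : ℕ, min (e ⟨a, ha⟩ : ℕ) (e ⟨b, hb⟩ : ℕ) < k →
          k ≤ max (e ⟨a, ha⟩ : ℕ) (e ⟨b, hb⟩ : ℕ) → ε k = true)
    (hprec : ∀ a b, prec a b ↔
      ∃ (ha : a ∈ Λ) (hb : b ∈ Λ),
        (e ⟨a, ha⟩ : ℕ) < (e ⟨b, hb⟩ : ℕ) ∧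
          ∃ k : ℕ, (e ⟨a, ha⟩ : ℕ) < k ∧ k ≤ (e ⟨b, hb⟩ : ℕ) ∧ ε k = false)
    -- `≈_p` is a congruence (`p` is an evaluation):
    (hcong : ∀ a b : L.Term Empty, a ∈ Λ → b ∈ Λ → approx a b →
      ∀ w : L.Term (Fin 1), w.subst (fun _ => a) ∈ Λ → w.subst (fun _ => b) ∈ Λ →
        approx (w.subst fun _ => a) (w.subst fun _ => b))
    (t s : L.Term Empty) (ht : t ∈ Λ) (hs : s ∈ Λ)
    (φ : QF L (Fin 1))
    (hφt : ∀ w ∈ (φ.substG fun _ => t).terms, w ∈ Λ)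
    (hφs : ∀ w ∈ (φ.substG fun _ => s).terms, w ∈ Λ)
    (hts : approx t s)
    (hsat : QF.sat approx prec (φ.substG fun _ => t)) :
    QF.sat approx prec (φ.substG fun _ => s) :=
  evaluation_leibniz_law_general L Λ n e ε approx prec happrox hprec hcong t s ht hs φ hφt hφs hts
    hsat
end

section
/- Every T₁-structure K satisfies the following four sentences: (i) ∀x (S(x) ≠ 0); (ii) ∀x ∀y (S(x) = S(y) → x = y); (iii) ∀x ¬(S(x) ≤ x); (iv) ∀x (x ≠ 0 → ∃y (x = S(y))). -/
/-- A `T₁`-structure: a set `K` interpreting the language `L_A = {0, S, +, ·, ≤}` and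
satisfying the (universal closures of the) axioms of the finite fragment `T₁`. -/
structure T1Structure (K : Type) where
  zero : K
  succ : K → K
  add : K → K → K
  mul : K → K → K
  le : K → K → Prop
  add_zero : ∀ x, add x zero = x
  add_succ : ∀ x y, add x (succ y) = succ (add x y)
  mul_zero : ∀ x, mul x zero = zero
  mul_succ : ∀ x y, mul x (succ y) = add (mul x y) x
  le_zero_iff : ∀ x, le x zero ↔ x = zero
  le_succ_iff : ∀ x y, le x (succ y) ↔ x = succ y ∨ le x y
  le_total : ∀ x y, le x y ∨ le y x
  le_trans : ∀ x y z, le x y → le y z → le x z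
  le_add_left : ∀ x z, le x (add z x)
  le_add_right : ∀ x z, le x (add x z)
  le_of_add_le_add : ∀ x y z, le (add x z) (add y z) → le x y
  le_of_mul_le_mul : ∀ x y z, z ≠ zero → le (mul x z) (mul y z) → le x y
  ne_iff : ∀ x y, x ≠ y ↔ (le (succ x) y ∨ le (succ y) x)
  not_le_iff : ∀ x y, ¬ le x y ↔ le (succ y) x
  exists_add_of_le : ∀ x y, le x y → ∃ z, add z x = y
  exists_div_mod : ∀ x y, y ≠ zero → ∃ q r, x = add r (mul q y) ∧ le r y

namespace T1Structure

variable {K : Type} (T : T1Structure K)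

theorem le_refl (x : K) : T.le x x :=
  (T.le_total x x).elim id id

theorem zero_le (x : K) : T.le T.zero x := by
  simpa only [T.add_zero] using T.le_add_left T.zero x

theorem not_succ_le_self (x : K) : ¬ T.le (T.succ x) x :=
  fun h => (T.not_le_iff (T.succ x) x).mpr (T.le_refl _) h

theorem succ_ne_zero (x : K) : T.succ x ≠ T.zero := fun h =>
  T.not_succ_le_self x (T.le_trans _ _ _ ((T.le_zero_iff _).mpr h) (T.zero_le x))

theorem succ_injective : Function.Injective T.succ := by
  intro x y h
  by_contra hne
  rcases (T.ne_iff x y).mp hne with hxy | hyx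
  · exact T.not_succ_le_self y (h ▸ hxy)
  · exact T.not_succ_le_self x (h ▸ hyx)

theorem exists_eq_succ_of_ne_zero {x : K} (hx : x ≠ T.zero) : ∃ y, x = T.succ y := by
  have hpos : T.le (T.succ T.zero) x :=
    (T.not_le_iff x T.zero).mp fun h => hx ((T.le_zero_iff x).mp h)
  obtain ⟨z, hz⟩ := T.exists_add_of_le _ _ hpos
  exact ⟨z, by rw [← hz, T.add_succ, T.add_zero]⟩

end T1Structure

/-- Every `T₁`-structure `K` satisfies:
(i) `∀x (S(x) ≠ 0)`; (ii) `∀x ∀y (S(x) = S(y) → x = y)`;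
(iii) `∀x ¬(S(x) ≤ x)`; (iv) `∀x (x ≠ 0 → ∃y (x = S(y)))`. -/
theorem T1Structure.succ_properties (K : Type) (T : T1Structure K) :
    (∀ x : K, T.succ x ≠ T.zero) ∧
    (∀ x y : K, T.succ x = T.succ y → x = y) ∧
    (∀ x : K, ¬ T.le (T.succ x) x) ∧
    (∀ x : K, x ≠ T.zero → ∃ y : K, x = T.succ y) :=
  ⟨T.succ_ne_zero, fun _ _ h => T.succ_injective h, T.not_succ_le_self,
    fun _ hx => T.exists_eq_succ_of_ne_zero hx⟩
end
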